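/- Let H ∈ ℝ, r₀ > 0, and let f be differentiable on [r₀, r₀ + T] (with sn_H > 0 there) satisfying f' ≤ -H - f² and f(r₀) ≤ sn_H'(r₀)/sn_H(r₀). Then f(s) ≤ sn_H'(s)/sn_H(s) for all s ∈ [r₀, r₀+T]. -/

import Mathlib

noncomputable def snH (H r : ℝ) : ℝ :=
  if 0 < H then Real.sin (Real.sqrt H * r) / Real.sqrt H
  else if H = 0 then r
  else Real.sinh (Real.sqrt (-H) * r) / Real.sqrt (-H)

noncomputable def snH' (H r : ℝ) : ℝ :=
  if 0 < H then Real.cos (Real.sqrt H * r)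
  else if H = 0 then 1
  else Real.cosh (Real.sqrt (-H) * r)

lemma snH_hasDerivAt (H r : ℝ) : HasDerivAt (snH H) (snH' H r) r := by
  rcases lt_trichotomy H 0 with h | h | h
  · have h1 : ¬ 0 < H := by linarith
    have h2 : H ≠ 0 := ne_of_lt h
    have hs : Real.sqrt (-H) ≠ 0 := (Real.sqrt_pos.mpr (by linarith)).ne'
    have heq : snH H = fun x => Real.sinh (Real.sqrt (-H) * x) / Real.sqrt (-H) := by
      funext x; simp [snH, h1, h2]
    rw [heq]
    have hd := (((Real.hasDerivAt_sinh (Real.sqrt (-H) * r)).comp r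
      ((hasDerivAt_id r).const_mul (Real.sqrt (-H))))).div_const (Real.sqrt (-H))
    convert hd using 1
    · rfl
    · rfl
    · rfl
    simp [snH', h1, h2]
    field_simp
  · subst h
    have heq : snH 0 = fun x => x := by funext x; simp [snH]
    rw [heq]
    have : snH' 0 r = 1 := by simp [snH']
    rw [this]
    exact hasDerivAt_id r
  · have hs : Real.sqrt H ≠ 0 := (Real.sqrt_pos.mpr h).ne'
    have heq : snH H = fun x => Real.sin (Real.sqrt H * x) / Real.sqrt H := by
      funext x; simp [snH, h]
    rw [heq]
    have hd := (((Real.hasDerivAt_sin (Real.sqrt H * r)).comp r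
      ((hasDerivAt_id r).const_mul (Real.sqrt H)))).div_const (Real.sqrt H)
    convert hd using 1
    · rfl
    · rfl
    · rfl
    simp [snH', h]
    field_simp

lemma snH'_hasDerivAt (H r : ℝ) : HasDerivAt (snH' H) (-H * snH H r) r := by
  rcases lt_trichotomy H 0 with h | h | h
  · have h1 : ¬ 0 < H := by linarith
    have h2 : H ≠ 0 := ne_of_lt h
    have hs : Real.sqrt (-H) ≠ 0 := (Real.sqrt_pos.mpr (by linarith)).ne'
    have heq : snH' H = fun x => Real.cosh (Real.sqrt (-H) * x) := by
      funext x; simp [snH', h1, h2]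
    rw [heq]
    have hd := ((Real.hasDerivAt_cosh (Real.sqrt (-H) * r)).comp r
      ((hasDerivAt_id r).const_mul (Real.sqrt (-H))))
    convert hd using 1
    · rfl
    · rfl
    · rfl
    simp [snH, h1, h2]
    have hsq := Real.mul_self_sqrt (show (0:ℝ) ≤ -H by linarith)
    field_simp
    linear_combination (-1 * Real.sinh (Real.sqrt (-H) * r)) * hsq
  · subst h
    have heq : snH' 0 = fun _ => (1:ℝ) := by funext x; simp [snH']
    rw [heq]
    have : -(0:ℝ) * snH 0 r = 0 := by ring
    rw [this]
    exact hasDerivAt_const r 1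
  · have hs : Real.sqrt H ≠ 0 := (Real.sqrt_pos.mpr h).ne'
    have heq : snH' H = fun x => Real.cos (Real.sqrt H * x) := by
      funext x; simp [snH', h]
    rw [heq]
    have hd := ((Real.hasDerivAt_cos (Real.sqrt H * r)).comp r
      ((hasDerivAt_id r).const_mul (Real.sqrt H)))
    convert hd using 1
    · rfl
    · rfl
    · rfl
    simp [snH, h]
    have hsq := Real.mul_self_sqrt h.le
    field_simp
    linear_combination (-1 * Real.sin (Real.sqrt H * r)) * hsq

/-- Riccati comparison: if `f' ≤ -H - f²` on `[r₀, r₀+T]` (with `sn_H > 0` there)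
and `f(r₀) ≤ sn_H'(r₀)/sn_H(r₀)`, then `f(s) ≤ sn_H'(s)/sn_H(s)` on `[r₀, r₀+T]`. -/
theorem stmt2 (H r₀ T : ℝ) (hr₀ : 0 < r₀) (hT : 0 ≤ T)
    (hsn : ∀ s ∈ Set.Icc r₀ (r₀ + T), 0 < snH H s)
    (f f' : ℝ → ℝ) (hderiv : ∀ s ∈ Set.Icc r₀ (r₀ + T), HasDerivAt f (f' s) s)
    (hric : ∀ s ∈ Set.Icc r₀ (r₀ + T), f' s ≤ -H - (f s) ^ 2)
    (hinit : f r₀ ≤ snH' H r₀ / snH H r₀) :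
    ∀ s ∈ Set.Icc r₀ (r₀ + T), f s ≤ snH' H s / snH H s := by
  have hle : r₀ ≤ r₀ + T := by linarith
  set I := Set.Icc r₀ (r₀ + T) with hI
  have huIcc : Set.uIcc r₀ (r₀ + T) = I := Set.uIcc_of_le hle
  -- continuity of f on I
  have hfc : ContinuousOn f I := fun s hs => ((hderiv s hs).continuousAt).continuousWithinAt
  -- primitive of f
  set F : ℝ → ℝ := fun s => ∫ t in r₀..s, f t with hF
  have hfint : IntervalIntegrable f MeasureTheory.volume r₀ (r₀ + T) :=
    (hfc.mono (le_of_eq huIcc)).intervalIntegrable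
  have hFc : ContinuousOn F I := by
    rw [← huIcc]
    exact intervalIntegral.continuousOn_primitive_interval' hfint (by rw [huIcc]; exact Set.left_mem_Icc.mpr hle)
  -- w and G
  set w : ℝ → ℝ := fun s => f s * snH H s - snH' H s with hw
  have hwc : ContinuousOn w I := by
    apply ContinuousOn.sub
    · exact hfc.mul (fun s _ => (snH_hasDerivAt H s).continuousAt.continuousWithinAt)
    · exact fun s _ => (snH'_hasDerivAt H s).continuousAt.continuousWithinAt
  set G : ℝ → ℝ := fun s => Real.exp (F s) * w s with hG
  have hGc : ContinuousOn G I := (hFc.rexp).mul hwc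
  -- derivative of G on interior
  have hGd : ∀ s ∈ Set.Ioo r₀ (r₀ + T), HasDerivAt G (Real.exp (F s) * f s * w s +
      Real.exp (F s) * (f' s * snH H s + f s * snH' H s - (-H * snH H s))) s := by
    intro s hs
    have hsI : s ∈ I := Set.Ioo_subset_Icc_self hs
    have hFd : HasDerivAt F (f s) s := by
      apply intervalIntegral.integral_hasDerivAt_right
      · exact (hfc.mono (by rw [← huIcc]; exact Set.uIcc_subset_uIcc_left (huIcc ▸ hsI))).intervalIntegrable
      · exact (hfc.mono Set.Ioo_subset_Icc_self).stronglyMeasurableAtFilter isOpen_Ioo s hs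
      · exact (hderiv s hsI).continuousAt
    have hwd : HasDerivAt w (f' s * snH H s + f s * snH' H s - (-H * snH H s)) s :=
      ((hderiv s hsI).mul (snH_hasDerivAt H s)).sub (snH'_hasDerivAt H s)
    exact (hFd.exp).mul hwd
  have hGanti : AntitoneOn G I := by
    apply antitoneOn_of_deriv_nonpos (convex_Icc _ _) hGc
    · intro s hs
      rw [interior_Icc] at hs
      exact ((hGd s hs).differentiableAt).differentiableWithinAt
    · intro s hs
      rw [interior_Icc] at hs
      have hsI : s ∈ I := Set.Ioo_subset_Icc_self hs
      rw [(hGd s hs).deriv]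
      have h1 := hric s hsI
      have h2 := hsn s hsI
      have h3 := Real.exp_pos (F s)
      have hkey : Real.exp (F s) * f s * w s +
          Real.exp (F s) * (f' s * snH H s + f s * snH' H s - (-H * snH H s)) =
          Real.exp (F s) * (snH H s * (f' s + (f s) ^ 2 + H)) := by
        simp only [hw]; ring
      rw [hkey]
      exact mul_nonpos_of_nonneg_of_nonpos h3.le
        (mul_nonpos_of_nonneg_of_nonpos h2.le (by linarith))
  -- initial condition
  have hw0 : w r₀ ≤ 0 := by
    have h2 := hsn r₀ (Set.left_mem_Icc.mpr hle)
    have := (div_le_div_iff_of_pos_right h2).mpr hinit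
    simp only [hw]
    nlinarith [(le_div_iff₀ h2).mp hinit]
  have hG0 : G r₀ = w r₀ := by
    simp [hG, hF, intervalIntegral.integral_same]
  intro s hs
  have := hGanti (Set.left_mem_Icc.mpr hle) hs hs.1
  rw [hG0] at this
  have hGs : Real.exp (F s) * w s ≤ 0 := le_trans this hw0
  have hws : w s ≤ 0 := nonpos_of_mul_nonpos_right ?_ (Real.exp_pos (F s))
  · have h2 := hsn s hs
    rw [le_div_iff₀ h2]
    simpa [hw] using hws
  · exact hGs
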